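/- If G is a cubic graph that is not bipartite, then the 3-coalition number of G satisfies C_3(G) = 3. -/

import Mathlib

open SimpleGraph

/-- A set `S` is a `k`-dominating set of `G` if every vertex outside `S`
has at least `k` neighbors in `S`. -/
def KDominatingSet {V : Type*} (G : SimpleGraph V) (k : ℕ) (S : Set V) : Prop :=
  ∀ v ∉ S, k ≤ (S ∩ G.neighborSet v).ncard

/-- Two disjoint sets `A` and `B` form a `k`-coalition in `G` if neither is a
`k`-dominating set of `G` but their union is. -/
def KCoalition {V : Type*} (G : SimpleGraph V) (k : ℕ) (A B : Set V) : Prop :=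
  Disjoint A B ∧ ¬ KDominatingSet G k A ∧ ¬ KDominatingSet G k B ∧
    KDominatingSet G k (A ∪ B)

/-- A `k`-coalition partition of `G` is a partition of the vertex set in which every
part is either a `k`-dominating set of cardinality `k` or forms a `k`-coalition with
another part. -/
def KCoalitionPartition {V : Type*} (G : SimpleGraph V) (k : ℕ) (P : Finset (Set V)) : Prop :=
  (∀ A ∈ P, A.Nonempty) ∧
  (P : Set (Set V)).PairwiseDisjoint id ∧
  (⋃ A ∈ P, A) = (Set.univ : Set V) ∧
  ∀ A ∈ P, (KDominatingSet G k A ∧ A.ncard = k) ∨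
    ∃ B ∈ P, B ≠ A ∧ KCoalition G k A B

/-- The `k`-coalition number of `G`: the maximum cardinality of a
`k`-coalition partition of `G`. -/
noncomputable def kCoalitionNumber {V : Type*} (G : SimpleGraph V) (k : ℕ) : ℕ :=
  sSup {n | ∃ P : Finset (Set V), KCoalitionPartition G k P ∧ P.card = n}

/-!
In a `k`-regular graph a set is `k`-dominating exactly when it is a vertex cover, and two
disjoint vertex covers are the sides of a bipartition. So if `G` is not bipartite, no part of a
coalition partition with at least two parts dominates, and any two coalition pairs share a part.
With four or more parts this forces every part to be in coalition with one part `Z`. Then `Z` is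
itself a vertex cover: an edge meets at most two parts, so some third part `W` misses it, and
`W ∪ Z` covers it. The partition `{v}, {u}, V \ {u, v}` along an edge `uv` attains three.
-/

namespace SimpleGraph

variable {V : Type*} {G : SimpleGraph V}

theorem isVertexCover_iff_neighborSet_subset {S : Set V} :
    G.IsVertexCover S ↔ ∀ v ∉ S, G.neighborSet v ⊆ S := by
  refine ⟨fun hS v hv w hw => (hS hw).resolve_left hv, fun h u w huw => ?_⟩
  by_cases hu : u ∈ S
  · exact Or.inl hu
  · exact Or.inr (h u hu huw)

theorem IsVertexCover.isBipartiteWith {S T : Set V} (hS : G.IsVertexCover S)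
    (hT : G.IsVertexCover T) (hST : Disjoint S T) : G.IsBipartiteWith S T where
  disjoint := hST
  mem_of_adj u w huw := by
    rcases hS huw with hu | hw
    · exact Or.inl ⟨hu, (hT huw).resolve_left (Set.disjoint_left.mp hST hu)⟩
    · exact Or.inr ⟨(hT huw).resolve_right (Set.disjoint_left.mp hST hw), hw⟩

theorem ncard_neighborSet (v : V) [Fintype (G.neighborSet v)] :
    (G.neighborSet v).ncard = G.degree v := by
  rw [Set.ncard_eq_toFinset_card', ← card_neighborFinset_eq_degree, neighborFinset]

variable [G.LocallyFinite] {k : ℕ}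

theorem IsRegularOfDegree.kDominatingSet_iff_isVertexCover (hG : G.IsRegularOfDegree k)
    {S : Set V} : KDominatingSet G k S ↔ G.IsVertexCover S := by
  rw [isVertexCover_iff_neighborSet_subset]
  refine forall₂_congr fun v _ => ?_
  have hk : (G.neighborSet v).ncard = k := (ncard_neighborSet v).trans (hG v)
  rw [← Set.inter_eq_right]
  refine ⟨fun h => Set.eq_of_subset_of_ncard_le Set.inter_subset_right (hk ▸ h), fun h => ?_⟩
  rw [h, hk]

theorem IsRegularOfDegree.exists_adj_ne (hG : G.IsRegularOfDegree k) (hk : 2 ≤ k) (v u : V) :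
    ∃ w, G.Adj v w ∧ w ≠ u :=
  (G.neighborSet v).exists_ne_of_one_lt_ncard (by rw [ncard_neighborSet, hG v]; omega) u

end SimpleGraph

theorem KCoalition.symm {V : Type*} {G : SimpleGraph V} {k : ℕ} {A B : Set V}
    (h : KCoalition G k A B) : KCoalition G k B A :=
  ⟨h.1.symm, h.2.2.1, h.2.1, Set.union_comm A B ▸ h.2.2.2⟩

namespace KCoalitionPartition

variable {V : Type*} {G : SimpleGraph V} {k : ℕ} {P : Finset (Set V)} {A B : Set V}

theorem disjoint (hP : KCoalitionPartition G k P) (hA : A ∈ P) (hB : B ∈ P) (hAB : A ≠ B) :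
    Disjoint A B :=
  hP.2.1 hA hB hAB

theorem exists_mem (hP : KCoalitionPartition G k P) (v : V) : ∃ A ∈ P, v ∈ A := by
  have hv : v ∈ ⋃ A ∈ P, A := hP.2.2.1 ▸ Set.mem_univ v
  simpa using hv

theorem not_kDominatingSet (hP : KCoalitionPartition G k P)
    (hG : {S : Set V | KDominatingSet G k S}.Intersecting)
    (hcard : 2 ≤ P.card) (hA : A ∈ P) : ¬ KDominatingSet G k A := by
  intro hAdom
  obtain ⟨B, hB, hBA⟩ := Finset.exists_mem_ne hcard A
  rcases hP.2.2.2 B hB with ⟨hBdom, -⟩ | ⟨C, hC, -, hBC⟩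
  · exact hG hAdom hBdom (hP.disjoint hA hB hBA.symm)
  · have hCA : C ≠ A := fun h => hBC.2.2.1 (h ▸ hAdom)
    exact hG hAdom hBC.2.2.2
      (Set.disjoint_union_right.mpr ⟨hP.disjoint hA hB hBA.symm, hP.disjoint hA hC hCA.symm⟩)

theorem exists_kCoalition (hP : KCoalitionPartition G k P)
    (hG : {S : Set V | KDominatingSet G k S}.Intersecting)
    (hcard : 2 ≤ P.card) (hA : A ∈ P) : ∃ B ∈ P, B ≠ A ∧ KCoalition G k A B :=
  (hP.2.2.2 A hA).resolve_left fun h => hP.not_kDominatingSet hG hcard hA h.1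

theorem eq_or_eq_or_eq_or_eq_of_kCoalition (hP : KCoalitionPartition G k P)
    (hG : {S : Set V | KDominatingSet G k S}.Intersecting)
    {X Y S T : Set V} (hX : X ∈ P) (hY : Y ∈ P) (hS : S ∈ P) (hT : T ∈ P)
    (hXY : KCoalition G k X Y) (hST : KCoalition G k S T) :
    X = S ∨ X = T ∨ Y = S ∨ Y = T := by
  by_contra! h
  exact hG hXY.2.2.2 hST.2.2.2 <| Set.disjoint_union_left.mpr
    ⟨Set.disjoint_union_right.mpr ⟨hP.disjoint hX hS h.1, hP.disjoint hX hT h.2.1⟩,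
      Set.disjoint_union_right.mpr ⟨hP.disjoint hY hS h.2.2.1, hP.disjoint hY hT h.2.2.2⟩⟩

theorem kCoalition_or_kCoalition (hP : KCoalitionPartition G k P)
    (hG : {S : Set V | KDominatingSet G k S}.Intersecting)
    (hcard : 2 ≤ P.card) (hA : A ∈ P) (hB : B ∈ P) (hAB : KCoalition G k A B)
    {X : Set V} (hX : X ∈ P) (hXA : X ≠ A) (hXB : X ≠ B) :
    KCoalition G k X A ∨ KCoalition G k X B := by
  obtain ⟨Y, hY, -, hXY⟩ := hP.exists_kCoalition hG hcard hX
  rcases hP.eq_or_eq_or_eq_or_eq_of_kCoalition hG hX hY hA hB hXY hAB with h | h | rfl | rfl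
  · exact absurd h hXA
  · exact absurd h hXB
  · exact Or.inl hXY
  · exact Or.inr hXY

theorem exists_forall_kCoalition (hP : KCoalitionPartition G k P)
    (hG : {S : Set V | KDominatingSet G k S}.Intersecting)
    (hcard : 4 ≤ P.card) : ∃ Z ∈ P, ∀ X ∈ P, X ≠ Z → KCoalition G k X Z := by
  obtain ⟨A, hA⟩ : P.Nonempty := Finset.card_pos.mp (by omega)
  obtain ⟨B, hB, hBA, hAB⟩ := hP.exists_kCoalition hG (by omega) hA
  by_cases hcase : ∀ X ∈ P, X ≠ A → X ≠ B → KCoalition G k X A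
  · refine ⟨A, hA, fun X hX hXA => ?_⟩
    by_cases hXB : X = B
    · exact hXB ▸ hAB.symm
    · exact hcase X hX hXA hXB
  push Not at hcase
  obtain ⟨X₀, hX₀, hX₀A, hX₀B, hX₀nA⟩ := hcase
  have hX₀B' : KCoalition G k X₀ B :=
    (hP.kCoalition_or_kCoalition hG (by omega) hA hB hAB hX₀ hX₀A hX₀B).resolve_left hX₀nA
  refine ⟨B, hB, fun X hX hXB => ?_⟩
  by_cases hXA : X = A
  · exact hXA ▸ hAB
  refine (hP.kCoalition_or_kCoalition hG (by omega) hA hB hAB hX hXA hXB).resolve_left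
    fun hXAco => ?_
  rcases hP.eq_or_eq_or_eq_or_eq_of_kCoalition hG hX hA hX₀ hB hXAco hX₀B' with rfl | h | h | h
  · exact hX₀nA hXAco
  · exact hXB h
  · exact hX₀A h.symm
  · exact hBA h.symm

theorem isVertexCover_of_isVertexCover_union (hP : KCoalitionPartition G k P)
    (hcard : 4 ≤ P.card) {Z : Set V}
    (h : ∀ X ∈ P, X ≠ Z → G.IsVertexCover (X ∪ Z)) : G.IsVertexCover Z := by
  classical
  intro u v huv
  obtain ⟨X, hX, hu⟩ := hP.exists_mem u
  obtain ⟨Y, hY, hv⟩ := hP.exists_mem v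
  obtain ⟨W, hW, hWZXY⟩ : ∃ W ∈ P, W ∉ ({Z, X, Y} : Finset (Set V)) :=
    Finset.exists_mem_notMem_of_card_lt_card (Finset.card_le_three.trans_lt (by omega))
  simp only [Finset.mem_insert, Finset.mem_singleton, not_or] at hWZXY
  obtain ⟨hWZ, hWX, hWY⟩ := hWZXY
  have huW : u ∉ W := Set.disjoint_right.mp (hP.disjoint hW hX hWX) hu
  have hvW : v ∉ W := Set.disjoint_right.mp (hP.disjoint hW hY hWY) hv
  rcases h W hW hWZ huv with hu' | hv'
  · exact Or.inl (hu'.resolve_left huW)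
  · exact Or.inr (hv'.resolve_left hvW)

theorem card_le_three [G.LocallyFinite] (hP : KCoalitionPartition G k P)
    (hreg : G.IsRegularOfDegree k) (hbip : ¬ G.IsBipartite) : P.card ≤ 3 := by
  have hcover {S : Set V} : KDominatingSet G k S ↔ G.IsVertexCover S :=
    hreg.kDominatingSet_iff_isVertexCover
  have hG : {S : Set V | KDominatingSet G k S}.Intersecting := fun S hS T hT hST =>
    hbip ((hcover.mp hS).isBipartiteWith (hcover.mp hT) hST).isBipartite
  by_contra! hcard
  obtain ⟨Z, hZ, hstar⟩ := hP.exists_forall_kCoalition hG hcard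
  refine hP.not_kDominatingSet hG (by omega) hZ (hcover.mpr ?_)
  exact hP.isVertexCover_of_isVertexCover_union hcard
    fun X hX hXZ => hcover.mp (hstar X hX hXZ).2.2.2

end KCoalitionPartition

section

variable {V : Type*} {G : SimpleGraph V} {k : ℕ}

theorem exists_kCoalitionPartition_card_eq_three_of_kCoalition {A B C : Set V}
    (hA : A.Nonempty) (hB : B.Nonempty) (hC : C.Nonempty) (hAB : Disjoint A B)
    (hABC : A ∪ B ∪ C = Set.univ)
    (hAC : KCoalition G k A C) (hBC : KCoalition G k B C) :
    ∃ P : Finset (Set V), KCoalitionPartition G k P ∧ P.card = 3 := by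
  classical
  have ne_of_disjoint {X Y : Set V} (hX : X.Nonempty) (hXY : Disjoint X Y) : X ≠ Y :=
    fun h => hX.ne_empty (disjoint_self.mp (h ▸ hXY))
  refine ⟨{A, B, C}, ⟨?_, ?_, ?_, ?_⟩, Finset.card_eq_three.mpr
    ⟨A, B, C, ne_of_disjoint hA hAB, ne_of_disjoint hA hAC.1, ne_of_disjoint hB hBC.1, rfl⟩⟩
  · simp only [Finset.mem_insert, Finset.mem_singleton]
    rintro X (rfl | rfl | rfl) <;> assumption
  · simp only [Finset.coe_insert, Finset.coe_singleton, Set.pairwiseDisjoint_insert,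
      Set.pairwiseDisjoint_singleton, Set.mem_insert_iff, Set.mem_singleton_iff, true_and,
      forall_eq_or_imp, forall_eq, id]
    exact ⟨fun _ => hBC.1, fun _ => hAB, fun _ => hAC.1⟩
  · simpa [Set.union_assoc] using hABC
  · simp only [Finset.mem_insert, Finset.mem_singleton]
    rintro X (rfl | rfl | rfl)
    · exact Or.inr ⟨C, by simp, (ne_of_disjoint hA hAC.1).symm, hAC⟩
    · exact Or.inr ⟨C, by simp, (ne_of_disjoint hB hBC.1).symm, hBC⟩
    · exact Or.inr ⟨A, by simp, ne_of_disjoint hA hAC.1, hAC.symm⟩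

theorem SimpleGraph.IsRegularOfDegree.exists_kCoalitionPartition_card_eq_three [Nonempty V]
    [G.LocallyFinite] (hG : G.IsRegularOfDegree k) (hk : 2 ≤ k) :
    ∃ P : Finset (Set V), KCoalitionPartition G k P ∧ P.card = 3 := by
  obtain ⟨v⟩ := ‹Nonempty V›
  obtain ⟨u, hvu, -⟩ := hG.exists_adj_ne hk v v
  obtain ⟨w, huw, hwv⟩ := hG.exists_adj_ne hk u v
  obtain ⟨x, hvx, hxu⟩ := hG.exists_adj_ne hk v u
  have not_kDominatingSet {S : Set V} {a b : V} (hab : G.Adj a b) (ha : a ∉ S) (hb : b ∉ S) :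
      ¬ KDominatingSet G k S := fun hS =>
    (hG.kDominatingSet_iff_isVertexCover.mp hS hab).elim ha hb
  have kDominatingSet_compl (a : V) : KDominatingSet G k {a}ᶜ :=
    hG.kDominatingSet_iff_isVertexCover.mpr (isVertexCover_compl.mpr (Set.pairwise_singleton _ _))
  have hC : ¬ KDominatingSet G k {u, v}ᶜ := not_kDominatingSet hvu (by simp) (by simp)
  refine exists_kCoalitionPartition_card_eq_three_of_kCoalition (C := {u, v}ᶜ)
    (Set.singleton_nonempty v) (Set.singleton_nonempty u) ⟨x, by simp [hxu, hvx.ne']⟩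
    (Set.disjoint_singleton.mpr hvu.ne) (by ext; simp)
    ⟨by simp, not_kDominatingSet huw (by simpa using hvu.ne') (by simpa using hwv), hC, ?_⟩
    ⟨by simp, not_kDominatingSet hvx (by simpa using hvu.ne) (by simpa using hxu), hC, ?_⟩
  · convert kDominatingSet_compl u using 1
    ext; grind [hvu.ne]
  · convert kDominatingSet_compl v using 1
    ext; grind [hvu.ne]

end

theorem c3_cubic_not_bipartite {V : Type*} [Fintype V] [Nonempty V] (G : SimpleGraph V)
    [DecidableRel G.Adj] (hcubic : ∀ v : V, G.degree v = 3)
    (hbip : ¬ G.Colorable 2) :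
    kCoalitionNumber G 3 = 3 := by
  obtain ⟨P, hP, hcard⟩ :=
    IsRegularOfDegree.exists_kCoalitionPartition_card_eq_three hcubic (by norm_num)
  refine IsGreatest.csSup_eq ⟨⟨P, hP, hcard⟩, ?_⟩
  rintro n ⟨Q, hQ, rfl⟩
  exact hQ.card_le_three hcubic hbip
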